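/- arXiv:2504.09385 — 4 statements merged into one kernel-verified Lean document; each statement's English description precedes it below -/
import Mathlib

section
/- Let w ∈ ℝᵈ, b ∈ ℝ, and ξ ∈ ℝᵈ with 0 < ξᵢ ≤ 1 for all i. If y_{1:d}(t) = ln(ξ) is constant and y_{d+1}(t) = exp(t·(⟨w, ln(ξ)⟩ + b)) with y_{d+1}(0) = 1, then y_{d+1}' = (⟨w, y_{1:d}⟩ + b)·y_{d+1} and at time 1, y_{d+1}(1) = e^b · ξ₁^{w₁} · ··· · ξ_d^{w_d}. -/
open scoped BigOperators

namespace Real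

theorem exp_sum_mul_log {ι : Type*} (s : Finset ι) (w x : ι → ℝ) (hx : ∀ i ∈ s, 0 < x i) :
    exp (∑ i ∈ s, w i * log (x i)) = ∏ i ∈ s, x i ^ w i := by
  rw [exp_sum]
  refine Finset.prod_congr rfl fun i hi => ?_
  rw [rpow_def_of_pos (hx i hi), mul_comm]

theorem hasDerivAt_exp_mul_const (c t : ℝ) :
    HasDerivAt (fun s => exp (s * c)) (c * exp (t * c)) t := by
  simpa [mul_comm] using ((hasDerivAt_id t).mul_const c).exp

end Real

/-- Lemma 3 of the paper: with `y_{1:d} = ln ξ` frozen, the state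
`y_{d+1}(t) = exp (t (⟨w, ln ξ⟩ + b))` solves `y' = (⟨w, y_{1:d}⟩ + b) y` with `y 0 = 1`,
and `y 1 = e^b ∏ i, ξ i ^ (w i)` (real powers). -/
theorem stmt_4 (d : ℕ) (w ξ : Fin d → ℝ) (b : ℝ)
    (hξ : ∀ i, 0 < ξ i ∧ ξ i ≤ 1) :
    (∀ t : ℝ, HasDerivAt
      (fun s : ℝ => Real.exp (s * ((∑ i, w i * Real.log (ξ i)) + b)))
      (((∑ i, w i * Real.log (ξ i)) + b) *
        Real.exp (t * ((∑ i, w i * Real.log (ξ i)) + b))) t) ∧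
    Real.exp ((0:ℝ) * ((∑ i, w i * Real.log (ξ i)) + b)) = 1 ∧
    Real.exp ((1:ℝ) * ((∑ i, w i * Real.log (ξ i)) + b)) =
      Real.exp b * ∏ i, Real.rpow (ξ i) (w i) := by
  refine ⟨fun t => Real.hasDerivAt_exp_mul_const _ t, by simp, ?_⟩
  rw [one_mul, Real.exp_add, mul_comm,
    Real.exp_sum_mul_log _ w ξ fun i _ => (hξ i).1]
  rfl
end

section
/- With the tanh partition of unity ψ_k as above and with approximate supports S_k := [(k−1)/N, (k+1)/N] for 1 ≤ k ≤ N−1, S₀ := [0, 1/N], S_N := [(N−1)/N, 1], the following holds: if 0 < δ < ½ and c ≥ 2N·artanh(1 − 2δ), then for every k ∈ {0,…,N} and every x ∈ [0,1] with x ∉ S_k, we have ψ_k(x) ≤ δ. -/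
/-- `γ_k = (2k-1)/(2N)`. -/
noncomputable def gam (N k : ℕ) : ℝ := (2 * (k:ℝ) - 1) / (2 * (N:ℝ))

/-- The inverse hyperbolic tangent. -/
noncomputable def artanh (x : ℝ) : ℝ := Real.log ((1 + x) / (1 - x)) / 2

/-- The tanh partition-of-unity functions `ψ_k`, `k = 0,…,N`. -/
noncomputable def psi (N : ℕ) (c : ℝ) (k : ℕ) (x : ℝ) : ℝ :=
  if k = 0 then 1/2 - 1/2 * Real.tanh (c * (x - gam N 1))
  else if k = N then 1/2 + 1/2 * Real.tanh (c * (x - gam N N))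
  else 1/2 * Real.tanh (c * (x - gam N k)) - 1/2 * Real.tanh (c * (x - gam N (k+1)))

/-- The approximate support `S_k` of `ψ_k`. -/
noncomputable def approxSupp (N k : ℕ) : Set ℝ :=
  if k = 0 then Set.Icc 0 (1 / (N:ℝ))
  else if k = N then Set.Icc (((N:ℝ) - 1) / N) 1
  else Set.Icc (((k:ℝ) - 1) / N) (((k:ℝ) + 1) / N)

lemma tanh_eq' (x : ℝ) : Real.tanh x = (Real.exp (2*x) - 1) / (Real.exp (2*x) + 1) := by
  rw [Real.tanh_eq_sinh_div_cosh, Real.sinh_eq, Real.cosh_eq]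
  have h1 : Real.exp (2*x) = Real.exp x * Real.exp x := by
    rw [← Real.exp_add]; ring_nf
  have h2 : Real.exp x > 0 := Real.exp_pos x
  have h3 : Real.exp (-x) = 1 / Real.exp x := by
    rw [Real.exp_neg]; exact inv_eq_one_div _
  rw [h1, h3]
  field_simp

lemma tanh_mono {a b : ℝ} (h : a ≤ b) : Real.tanh a ≤ Real.tanh b := by
  rw [tanh_eq', tanh_eq']
  have ha : (0:ℝ) < Real.exp (2*a) + 1 := by positivity
  have hb : (0:ℝ) < Real.exp (2*b) + 1 := by positivity
  rw [div_le_div_iff₀ ha hb]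
  have : Real.exp (2*a) ≤ Real.exp (2*b) := Real.exp_le_exp.2 (by linarith)
  nlinarith

lemma tanh_le_one (x : ℝ) : Real.tanh x ≤ 1 := by
  rw [tanh_eq']
  have ha : (0:ℝ) < Real.exp (2*x) + 1 := by positivity
  rw [div_le_one ha]; linarith

lemma neg_one_le_tanh (x : ℝ) : -1 ≤ Real.tanh x := by
  have := tanh_le_one (-x)
  rw [Real.tanh_neg] at this; linarith

lemma tanh_artanh {y : ℝ} (h1 : -1 < y) (h2 : y < 1) : Real.tanh (artanh y) = y := by
  have hu : (0:ℝ) < (1 + y) / (1 - y) := by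
    apply div_pos <;> linarith
  have he : Real.exp (2 * artanh y) = (1 + y) / (1 - y) := by
    unfold artanh
    rw [show 2 * (Real.log ((1 + y) / (1 - y)) / 2) = Real.log ((1+y)/(1-y)) by ring,
      Real.exp_log hu]
  rw [tanh_eq', he]
  have h3 : (1:ℝ) - y > 0 := by linarith
  field_simp
  ring

lemma artanh_nonneg {y : ℝ} (h0 : 0 ≤ y) (h1 : y < 1) : 0 ≤ artanh y := by
  unfold artanh
  have : (1:ℝ) ≤ (1 + y) / (1 - y) := by
    rw [le_div_iff₀ (by linarith)]; linarith
  have := Real.log_nonneg this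
  linarith

/-- If `0 < δ < 1/2` and `c ≥ 2N·artanh(1-2δ)`, then `ψ_k(x) ≤ δ` for every
`x ∈ [0,1]` outside the approximate support `S_k`. -/
theorem stmt_7 (N : ℕ) (hN : 1 ≤ N) (δ : ℝ) (hδ0 : 0 < δ) (hδ : δ < 1/2)
    (c : ℝ) (hc : 2 * (N:ℝ) * artanh (1 - 2 * δ) ≤ c) :
    ∀ k ≤ N, ∀ x ∈ Set.Icc (0:ℝ) 1, x ∉ approxSupp N k → psi N c k x ≤ δ := by
  have hN0 : (0:ℝ) < N := by exact_mod_cast hN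
  set a := artanh (1 - 2 * δ) with ha_def
  have ha0 : 0 ≤ a := artanh_nonneg (by linarith) (by linarith)
  have hc0 : 0 ≤ c := le_trans (by positivity) hc
  have hta : Real.tanh a = 1 - 2 * δ := tanh_artanh (by linarith) (by linarith)
  have keyP : ∀ t : ℝ, 1 / (2 * (N:ℝ)) ≤ t → 1 - 2 * δ ≤ Real.tanh (c * t) := by
    intro t ht
    rw [← hta]
    apply tanh_mono
    have h1 : a ≤ c * (1 / (2 * (N:ℝ))) := by
      rw [mul_one_div, le_div_iff₀ (by positivity)]
      linarith [hc]
    have h2 : c * (1 / (2 * (N:ℝ))) ≤ c * t := mul_le_mul_of_nonneg_left ht hc0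
    linarith
  have keyN : ∀ t : ℝ, t ≤ -(1 / (2 * (N:ℝ))) → Real.tanh (c * t) ≤ -(1 - 2 * δ) := by
    intro t ht
    have := keyP (-t) (by linarith)
    rw [show c * t = -(c * (-t)) by ring, Real.tanh_neg]
    linarith
  intro k hk x hx hxS
  obtain ⟨hx0, hx1⟩ := hx
  rcases eq_or_ne k 0 with hk0 | hk0
  · simp only [approxSupp, if_pos hk0, Set.mem_Icc, not_and_or, not_le] at hxS
    have hxgt : 1 / (N:ℝ) < x := by
      rcases hxS with h | h
      · linarith
      · exact h
    simp only [psi, if_pos hk0, gam, Nat.cast_one]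
    have h1 : 1 / (2 * (N:ℝ)) ≤ x - (2 * 1 - 1) / (2 * (N:ℝ)) := by
      have hE : x - (2 * 1 - 1) / (2 * (N:ℝ)) - 1 / (2 * (N:ℝ)) = x - 1 / (N:ℝ) := by
        field_simp; ring
      linarith
    linarith [keyP _ h1]
  · rcases eq_or_ne k N with hkN | hkN
    · simp only [approxSupp, if_neg hk0, if_pos hkN, Set.mem_Icc, not_and_or, not_le] at hxS
      have hlt : x < ((N:ℝ) - 1) / N := by
        rcases hxS with h | h
        · exact h
        · linarith
      simp only [psi, if_neg hk0, if_pos hkN, gam]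
      have h1 : x - (2 * (N:ℝ) - 1) / (2 * (N:ℝ)) ≤ -(1 / (2 * (N:ℝ))) := by
        have hE : x - (2 * (N:ℝ) - 1) / (2 * (N:ℝ)) + 1 / (2 * (N:ℝ))
            = x - ((N:ℝ) - 1) / N := by field_simp; ring
        linarith
      linarith [keyN _ h1]
    · simp only [approxSupp, if_neg hk0, if_neg hkN, Set.mem_Icc, not_and_or, not_le] at hxS
      simp only [psi, if_neg hk0, if_neg hkN, gam, Nat.cast_add, Nat.cast_one]
      rcases hxS with hlt | hgt
      · have h1 : x - (2 * (k:ℝ) - 1) / (2 * (N:ℝ)) ≤ -(1 / (2 * (N:ℝ))) := by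
          have hE : x - (2 * (k:ℝ) - 1) / (2 * (N:ℝ)) + 1 / (2 * (N:ℝ))
              = x - ((k:ℝ) - 1) / N := by field_simp; ring
          linarith
        have h3 := neg_one_le_tanh (c * (x - (2 * ((k:ℝ) + 1) - 1) / (2 * (N:ℝ))))
        linarith [keyN _ h1]
      · have h1 : 1 / (2 * (N:ℝ)) ≤ x - (2 * ((k:ℝ) + 1) - 1) / (2 * (N:ℝ)) := by
          have hE : x - (2 * ((k:ℝ) + 1) - 1) / (2 * (N:ℝ)) - 1 / (2 * (N:ℝ))
              = x - ((k:ℝ) + 1) / N := by field_simp; ring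
          linarith
        have h3 := tanh_le_one (c * (x - (2 * (k:ℝ) - 1) / (2 * (N:ℝ))))
        linarith [keyP _ h1]
end

section
/- Let A ∈ ℝ^{(N+1)×(N+1)} be the upper-triangular matrix with diagonal entries −ln 2 and entries A_{k,ℓ} = −1/(ℓ−k) for ℓ > k (0-indexed). Then its matrix exponential e^A is the upper bidiagonal matrix with ½ on the diagonal, −½ on the superdiagonal, and 0 elsewhere. -/
/-!
Write `A = (-ln 2) • 1 - L(S)`, where `S` is the shift matrix (so `S ^ (N + 1) = 0`) and
`L(s) = ∑_{m ≥ 1} s ^ m / m` is the truncation of `-log (1 - s)`. The scalar part commutes with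
everything, so `e^A = ½ e^{-L(S)}`, and `e^{-L(s)} = 1 - s` for every nilpotent `s` in a real
Banach algebra: all `L(t s)` commute, so `t ↦ e^{L(t s)} (1 - t s)` has derivative
`e^{L(t s)} s ((∑_{m < n} (t s) ^ m) (1 - t s) - 1) = -e^{L(t s)} s (t s) ^ n = 0`,
hence is constantly `1`.
-/

open NormedSpace Finset

section BanachAlgebra

variable {𝔸 : Type*} [NormedRing 𝔸] [NormedAlgebra ℝ 𝔸]

theorem hasDerivAt_sum_pow_div_smul_pow (s : 𝔸) (n : ℕ) (t : ℝ) :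
    HasDerivAt (fun u : ℝ => ∑ m ∈ range n, (u ^ (m + 1) / (m + 1)) • s ^ (m + 1))
      (s * ∑ m ∈ range n, (t • s) ^ m) t := by
  have hterm (m : ℕ) : HasDerivAt (fun u : ℝ => (u ^ (m + 1) / (m + 1)) • s ^ (m + 1))
      (s * (t • s) ^ m) t := by
    refine (((hasDerivAt_pow (m + 1) t).div_const ((m : ℝ) + 1)).smul_const
      (s ^ (m + 1))).congr_deriv ?_
    rw [smul_pow, mul_smul_comm, ← pow_succ']
    congr 1
    push_cast
    field_simp
  rw [mul_sum]
  exact HasDerivAt.fun_sum fun m _ => hterm m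

variable [CompleteSpace 𝔸]

theorem hasDerivAt_exp_comp_of_commute {f : ℝ → 𝔸} {f' : 𝔸} {t : ℝ} (hf : HasDerivAt f f' t)
    (hcomm : ∀ u, Commute (f t) (f u)) :
    HasDerivAt (fun u => exp (f u)) (exp (f t) * f') t := by
  let _ : NormedAlgebra ℚ 𝔸 := NormedAlgebra.restrictScalars ℚ ℝ 𝔸
  have hsplit : (fun u => exp (f u)) = fun u => exp (f t) * exp (f u - f t) := by
    funext u
    rw [← exp_add_of_commute ((hcomm u).sub_right (Commute.refl _)), add_sub_cancel]
  have hincrement : HasDerivAt (fun u => exp (f u - f t)) f' t :=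
    (hasFDerivAt_exp_zero (𝕂 := ℝ) (𝔸 := 𝔸)).comp_hasDerivAt_of_eq t (hf.sub_const (f t))
      (sub_self _).symm
  rw [hsplit]
  exact hincrement.const_mul (exp (f t))

variable {s : 𝔸} {n : ℕ}

theorem exp_sum_pow_div_smul_pow_mul_one_sub_smul (hs : s ^ n = 0) (t : ℝ) :
    exp (∑ m ∈ range n, (t ^ (m + 1) / (m + 1)) • s ^ (m + 1)) * (1 - t • s) = 1 := by
  set L : ℝ → 𝔸 := fun u => ∑ m ∈ range n, (u ^ (m + 1) / (m + 1)) • s ^ (m + 1)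
  have hcomm (u v : ℝ) : Commute (L u) (L v) :=
    Commute.sum_left _ _ _ fun i _ => Commute.sum_right _ _ _ fun j _ =>
      ((Commute.pow_pow_self s _ _).smul_left _).smul_right _
  have hderiv (u : ℝ) : HasDerivAt (fun v => exp (L v) * (1 - v • s)) 0 u := by
    have hexp := hasDerivAt_exp_comp_of_commute (hasDerivAt_sum_pow_div_smul_pow s n u) (hcomm u)
    have hlin : HasDerivAt (fun v : ℝ => 1 - v • s) (-((1 : ℝ) • s)) u :=
      ((hasDerivAt_id u).smul_const s).const_sub 1
    refine (hexp.mul hlin).congr_deriv ?_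
    have hgeom : (∑ m ∈ range n, (u • s) ^ m) * (1 - u • s) = 1 := by
      rw [geom_sum_mul_neg, smul_pow, hs, smul_zero, sub_zero]
    rw [one_smul, mul_assoc, mul_assoc, hgeom]
    noncomm_ring
  have hL0 : L 0 = 0 := by simp [L]
  calc exp (L t) * (1 - t • s) = exp (L 0) * (1 - (0 : ℝ) • s) :=
        is_const_of_deriv_eq_zero (fun u => (hderiv u).differentiableAt)
          (fun u => (hderiv u).deriv) t 0
    _ = 1 := by rw [hL0, exp_zero, zero_smul, sub_zero, one_mul]

theorem exp_neg_sum_pow_div_of_pow_eq_zero (hs : s ^ n = 0) :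
    exp (-∑ m ∈ range n, ((m : ℝ) + 1)⁻¹ • s ^ (m + 1)) = 1 - s := by
  let _ : NormedAlgebra ℚ 𝔸 := NormedAlgebra.restrictScalars ℚ ℝ 𝔸
  have hL := exp_sum_pow_div_smul_pow_mul_one_sub_smul hs 1
  simp only [one_pow, one_div, one_smul] at hL
  set L := ∑ m ∈ range n, ((m : ℝ) + 1)⁻¹ • s ^ (m + 1)
  calc exp (-L) = exp (-L) * (exp L * (1 - s)) := by rw [hL, mul_one]
    _ = exp (-L + L) * (1 - s) := by
      rw [exp_add_of_commute (Commute.neg_left (Commute.refl L)), mul_assoc]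
    _ = 1 - s := by rw [neg_add_cancel, exp_zero, one_mul]

end BanachAlgebra

namespace Matrix

def shift (R : Type*) [Zero R] [One R] (n : ℕ) : Matrix (Fin n) (Fin n) R :=
  of fun i j => if (j : ℕ) = i + 1 then 1 else 0

section Shift

variable {R : Type*} [Semiring R] {n : ℕ}

theorem shift_pow_apply (m : ℕ) (i j : Fin n) :
    (shift R n ^ m) i j = if (j : ℕ) = i + m then 1 else 0 := by
  induction m generalizing i with
  | zero => simp [one_apply, Fin.ext_iff, eq_comm]
  | succ m ih =>
    rw [pow_succ', mul_apply]
    simp only [ih]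
    simp only [shift, of_apply, ite_mul, one_mul, zero_mul]
    by_cases hi : (i : ℕ) + 1 < n
    · rw [Fintype.sum_eq_single ⟨i + 1, hi⟩ fun k hk => if_neg fun e => hk (Fin.ext e)]
      rw [if_pos rfl, add_right_comm, add_assoc]
    · rw [Finset.sum_eq_zero fun k _ => if_neg (by omega), if_neg (by omega)]

theorem shift_pow_self : shift R n ^ n = 0 := by
  ext i j
  rw [shift_pow_apply, if_neg (by omega), zero_apply]

theorem sum_smul_shift_pow_succ_apply (c : ℕ → R) (i j : Fin n) :
    (∑ m ∈ range n, c m • shift R n ^ (m + 1)) i j =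
      if (i : ℕ) < j then c (j - i - 1) else 0 := by
  simp only [sum_apply, smul_apply, shift_pow_apply, smul_eq_mul, mul_ite, mul_one, mul_zero]
  split_ifs with hij
  · rw [Finset.sum_eq_single ((j : ℕ) - i - 1) (fun m _ hm => if_neg (by omega))
      (fun h => by simp at h; omega), if_pos (by omega)]
  · exact Finset.sum_eq_zero fun m _ => if_neg (by omega)

end Shift

theorem exp_algebraMap_sub_sum_pow_div {ι : Type*} [Fintype ι] [DecidableEq ι] (r : ℝ)
    {M : Matrix ι ι ℝ} {n : ℕ} (hM : M ^ n = 0) :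
    exp (algebraMap ℝ _ r - ∑ m ∈ range n, ((m : ℝ) + 1)⁻¹ • M ^ (m + 1)) =
      Real.exp r • (1 - M) := by
  let _ := Matrix.linftyOpNormedRing (n := ι) (α := ℝ)
  let _ := Matrix.linftyOpNormedAlgebra (n := ι) (R := ℝ) (α := ℝ)
  have hscalar : exp (algebraMap ℝ (Matrix ι ι ℝ) r) = algebraMap ℝ _ (Real.exp r) := by
    rw [Real.exp_eq_exp_ℝ]
    exact (algebraMap_exp_comm r).symm
  have hnilpotent : exp (-∑ m ∈ range n, ((m : ℝ) + 1)⁻¹ • M ^ (m + 1)) = 1 - M :=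
    _root_.exp_neg_sum_pow_div_of_pow_eq_zero hM
  rw [sub_eq_add_neg, exp_add_of_commute _ _ (Algebra.commute_algebraMap_left _ _), hscalar,
    hnilpotent, Algebra.smul_def]

end Matrix

/-- The upper-triangular matrix `A` with diagonal `-ln 2` and `A_{k,ℓ} = -1/(ℓ-k)` for `ℓ > k`
has matrix exponential equal to the upper bidiagonal matrix with `1/2` on the diagonal and
`-1/2` on the superdiagonal. -/
theorem stmt_8 (N : ℕ) :
    NormedSpace.exp
      (Matrix.of fun i j : Fin (N + 1) =>
        if i = j then -Real.log 2
        else if (i:ℕ) < (j:ℕ) then -1 / ((j:ℕ) - (i:ℕ) : ℝ)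
        else 0) =
    Matrix.of fun i j : Fin (N + 1) =>
      if i = j then (1/2 : ℝ)
      else if (j:ℕ) = (i:ℕ) + 1 then -1/2
      else 0 := by
  have hA : (Matrix.of fun i j : Fin (N + 1) =>
        if i = j then -Real.log 2
        else if (i:ℕ) < (j:ℕ) then -1 / ((j:ℕ) - (i:ℕ) : ℝ)
        else 0) = algebraMap ℝ _ (-Real.log 2) -
      ∑ m ∈ range (N + 1), ((m : ℝ) + 1)⁻¹ • Matrix.shift ℝ (N + 1) ^ (m + 1) := by
    ext i j
    rw [Matrix.sub_apply, Matrix.sum_smul_shift_pow_succ_apply, Matrix.algebraMap_matrix_apply,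
      Matrix.of_apply]
    split_ifs <;> try omega
    · simp
    · rw [Nat.cast_sub (by omega), Nat.cast_sub (by omega)]
      push_cast
      ring
    · simp
  rw [hA, Matrix.exp_algebraMap_sub_sum_pow_div _ Matrix.shift_pow_self, Real.exp_neg,
    Real.exp_log two_pos]
  ext i j
  simp only [Matrix.smul_apply, Matrix.sub_apply, Matrix.one_apply, Matrix.shift, Matrix.of_apply]
  split_ifs <;> first | omega | norm_num
end

section
/- (Bihari–LaSalle-type bound, special case.) Let a, b > 0 and let u : [0,1] → [0,∞) be a continuously differentiable function satisfying u'(t) ≤ a·u(t) + b·u(t)² for all t ∈ [0,1], with u(0) ≤ δ for some δ ≥ 0. If δ < a/(b·(e^a − 1)), then u(1) ≤ (a·e^a·δ)/(a − b·(e^a − 1)·δ). -/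
/-!
The substitution `z = u / (a + b u)` turns `u' ≤ a u + b u²` into the linear inequality
`z' = a u' / (a + b u)² ≤ a z`, so Grönwall gives `z 1 ≤ e^a δ / (a + b δ)`. Solving
`u / (a + b u) ≤ e^a δ / (a + b δ)` for `u` is possible exactly while the right-hand side stays
below `1 / b`, which is the smallness condition on `δ`, and yields the stated bound (the value at
time `1` of the solution of `v' = a v + b v²`, `v 0 = δ`).
-/

open Real Set

section Riccati

variable {a b : ℝ}

theorem HasDerivAt.div_const_add_mul {u : ℝ → ℝ} {u' t : ℝ} (hu : HasDerivAt u u' t)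
    (hd : a + b * u t ≠ 0) :
    HasDerivAt (fun s => u s / (a + b * u s)) (a * u' / (a + b * u t) ^ 2) t := by
  have h := hu.div ((hu.const_mul b).const_add a) hd
  rwa [show u' * (a + b * u t) - u t * (b * u') = a * u' by ring] at h

theorem div_const_add_mul_le_div_const_add_mul (ha : 0 < a) (hb : 0 ≤ b) {x y : ℝ}
    (hx : 0 ≤ x) (hxy : x ≤ y) : x / (a + b * x) ≤ y / (a + b * y) := by
  rw [div_le_div_iff₀ (by positivity) (by nlinarith)]
  nlinarith

theorem mul_div_sq_le_of_le_riccati (ha : 0 < a) (hb : 0 ≤ b) {x y : ℝ} (hx : 0 ≤ x)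
    (hy : y ≤ a * x + b * x ^ 2) : a * y / (a + b * x) ^ 2 ≤ a * (x / (a + b * x)) := by
  have hd : 0 < a + b * x := by positivity
  rw [div_le_iff₀ (by positivity), mul_div_assoc', div_mul_eq_mul_div, sq,
    ← mul_assoc, mul_div_cancel_right₀ _ hd.ne']
  nlinarith

theorem le_mul_exp_of_riccati {u u' : ℝ → ℝ} {t₀ t₁ δ : ℝ} (ha : 0 < a) (hb : 0 ≤ b)
    (hpos : ∀ t ∈ Icc t₀ t₁, 0 ≤ u t)
    (hderiv : ∀ t ∈ Icc t₀ t₁, HasDerivAt u (u' t) t)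
    (hineq : ∀ t ∈ Icc t₀ t₁, u' t ≤ a * u t + b * u t ^ 2) (h₀ : u t₀ ≤ δ) :
    ∀ t ∈ Icc t₀ t₁, u t / (a + b * u t) ≤ δ / (a + b * δ) * exp (a * (t - t₀)) := by
  have hd : ∀ t ∈ Icc t₀ t₁, 0 < a + b * u t := fun t ht => by
    have := hpos t ht
    positivity
  have hz : ∀ t ∈ Icc t₀ t₁, HasDerivAt (fun s => u s / (a + b * u s))
      (a * u' t / (a + b * u t) ^ 2) t := fun t ht =>
    (hderiv t ht).div_const_add_mul (hd t ht).ne'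
  intro t ht
  have ht₀ : t₀ ∈ Icc t₀ t₁ := ⟨le_rfl, ht.1.trans ht.2⟩
  calc u t / (a + b * u t) ≤ gronwallBound (δ / (a + b * δ)) a 0 (t - t₀) :=
        le_gronwallBound_of_liminf_deriv_right_le
          (fun s hs => (hz s hs).continuousAt.continuousWithinAt)
          (fun s hs _ hr =>
            (hz s (Ico_subset_Icc_self hs)).hasDerivWithinAt.liminf_right_slope_le hr)
          (div_const_add_mul_le_div_const_add_mul ha hb (hpos t₀ ht₀) h₀)
          (fun s hs => by
            rw [add_zero]
            exact mul_div_sq_le_of_le_riccati ha hb (hpos s (Ico_subset_Icc_self hs))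
              (hineq s (Ico_subset_Icc_self hs)))
          t ht
    _ = δ / (a + b * δ) * exp (a * (t - t₀)) := gronwallBound_ε0 _ _ _

theorem le_div_of_div_const_add_mul_le {x δ E : ℝ} (hx : 0 < a + b * x) (hδ : 0 < a + b * δ)
    (hA : 0 < a - b * (E - 1) * δ) (h : x / (a + b * x) ≤ δ / (a + b * δ) * E) :
    x ≤ a * E * δ / (a - b * (E - 1) * δ) := by
  rw [div_mul_eq_mul_div, div_le_div_iff₀ hx hδ] at h
  rw [le_div_iff₀ hA]
  linarith

end Riccati

theorem stmt_13_general (a b δ : ℝ) (ha : 0 < a) (hb : 0 < b)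
    (u u' : ℝ → ℝ)
    (hpos : ∀ t ∈ Set.Icc (0:ℝ) 1, 0 ≤ u t)
    (hderiv : ∀ t ∈ Set.Icc (0:ℝ) 1, HasDerivAt u (u' t) t)
    (hineq : ∀ t ∈ Set.Icc (0:ℝ) 1, u' t ≤ a * u t + b * (u t) ^ 2)
    (h0 : u 0 ≤ δ)
    (hsmall : δ < a / (b * (Real.exp a - 1))) :
    u 1 ≤ a * Real.exp a * δ / (a - b * (Real.exp a - 1) * δ) := by
  have hu₀ : 0 ≤ u 0 := hpos 0 ⟨le_rfl, zero_le_one⟩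
  have hu₁ : 0 ≤ u 1 := hpos 1 ⟨zero_le_one, le_rfl⟩
  have hδ : 0 ≤ δ := hu₀.trans h0
  have hexp : 0 < exp a - 1 := by linarith [add_one_lt_exp ha.ne']
  have hA : 0 < a - b * (exp a - 1) * δ := by
    rw [lt_div_iff₀ (by positivity)] at hsmall
    linarith
  have h := le_mul_exp_of_riccati ha hb.le hpos hderiv hineq h0 1 ⟨zero_le_one, le_rfl⟩
  rw [sub_zero, mul_one] at h
  exact le_div_of_div_const_add_mul_le (by positivity) (by positivity) hA h

/-- Bihari–LaSalle-type bound: if `u' ≤ a u + b u²` on `[0,1]`, `u ≥ 0`, `u 0 ≤ δ`, and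
`δ < a / (b (e^a - 1))`, then `u 1 ≤ a e^a δ / (a - b (e^a - 1) δ)`. -/
theorem stmt_13 (a b δ : ℝ) (ha : 0 < a) (hb : 0 < b) (hδ : 0 ≤ δ)
    (u u' : ℝ → ℝ)
    (hpos : ∀ t ∈ Set.Icc (0:ℝ) 1, 0 ≤ u t)
    (hderiv : ∀ t ∈ Set.Icc (0:ℝ) 1, HasDerivAt u (u' t) t)
    (hcont : ContinuousOn u' (Set.Icc (0:ℝ) 1))
    (hineq : ∀ t ∈ Set.Icc (0:ℝ) 1, u' t ≤ a * u t + b * (u t) ^ 2)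
    (h0 : u 0 ≤ δ)
    (hsmall : δ < a / (b * (Real.exp a - 1))) :
    u 1 ≤ a * Real.exp a * δ / (a - b * (Real.exp a - 1) * δ) :=
  stmt_13_general a b δ ha hb u u' hpos hderiv hineq h0 hsmall
end
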